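/- In a distributive weakly complemented lattice L, the congruences generated by S-filters permute: for S-filters F₁, F₂, θ_{F₁} ∘ θ_{F₂} = θ_{F₂} ∘ θ_{F₁}, where θ_F := {(x,y) : ∃ u ∈ F, x ∨ u^Δ = y ∨ u^Δ}. -/
import Mathlib


/-- A distributive weakly complemented lattice. -/
class DistribWCL (L : Type*) extends DistribLattice L, BoundedOrder L where
  delta : L → L
  delta_delta_le : ∀ x : L, delta (delta x) ≤ x
  delta_antitone : ∀ x y : L, x ≤ y → delta y ≤ delta x
  delta_ax3 : ∀ x y : L, (x ⊓ y) ⊔ (x ⊓ delta y) = x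

open DistribWCL

variable {L : Type*}

/-- A filter: nonempty, upward closed, closed under meets. -/
def IsFilter [Lattice L] (F : Set L) : Prop :=
  F.Nonempty ∧ (∀ x ∈ F, ∀ y : L, x ≤ y → y ∈ F) ∧ (∀ x ∈ F, ∀ y ∈ F, x ⊓ y ∈ F)

/-- x ⊓̄ y := (x^Δ ∨ y^Δ)^Δ. -/
def sqcap [DistribWCL L] (x y : L) : L := delta (delta x ⊔ delta y)

/-- An S-filter: a filter closed under ⊓̄. -/
def IsSFilter [DistribWCL L] (F : Set L) : Prop :=
  IsFilter F ∧ ∀ x ∈ F, ∀ y ∈ F, sqcap x y ∈ F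

/-- The relation θ_F induced by a filter F. -/
def thetaF [DistribWCL L] (F : Set L) (x y : L) : Prop :=
  ∃ u ∈ F, x ⊔ delta u = y ⊔ delta u

/-- A congruence on (L; ∨, ∧, ^Δ). -/
def IsWCLCongruence [DistribWCL L] (r : L → L → Prop) : Prop :=
  Equivalence r ∧
  (∀ x y z : L, r x y → r (x ⊓ z) (y ⊓ z)) ∧
  (∀ x y z : L, r x y → r (x ⊔ z) (y ⊔ z)) ∧
  (∀ x y : L, r x y → r (delta x) (delta y))

lemma thetaF_comp_swap [DistribWCL L] {F₁ F₂ : Set L} {x y : L}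
    (h : Relation.Comp (thetaF F₁) (thetaF F₂) x y) :
    Relation.Comp (thetaF F₂) (thetaF F₁) x y := by
  obtain ⟨z, ⟨u, hu, hxu⟩, ⟨v, hv, hzv⟩⟩ := h
  set a := delta u with ha
  set b := delta v with hb
  have hx : x ⊔ b ≤ (y ⊔ a) ⊔ b := by
    have : x ≤ (y ⊔ b) ⊔ a := by
      calc x ≤ x ⊔ a := le_sup_left
        _ = z ⊔ a := hxu
        _ ≤ (z ⊔ b) ⊔ a := by gcongr; exact le_sup_left
        _ = (y ⊔ b) ⊔ a := by rw [hzv]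
    calc x ⊔ b ≤ ((y ⊔ b) ⊔ a) ⊔ b := by gcongr
      _ = (y ⊔ a) ⊔ b := by ac_rfl
  have hy : y ⊔ a ≤ (x ⊔ b) ⊔ a := by
    have : y ≤ (x ⊔ a) ⊔ b := by
      calc y ≤ y ⊔ b := le_sup_left
        _ = z ⊔ b := hzv.symm
        _ ≤ (z ⊔ a) ⊔ b := by gcongr; exact le_sup_left
        _ = (x ⊔ a) ⊔ b := by rw [hxu]
    calc y ⊔ a ≤ ((x ⊔ a) ⊔ b) ⊔ a := by gcongr
      _ = (x ⊔ b) ⊔ a := by ac_rfl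
  refine ⟨(x ⊔ b) ⊓ (y ⊔ a), ⟨v, hv, ?_⟩, ⟨u, hu, ?_⟩⟩
  · show x ⊔ b = ((x ⊔ b) ⊓ (y ⊔ a)) ⊔ b
    calc x ⊔ b = (x ⊔ b) ⊓ ((y ⊔ a) ⊔ b) := (inf_eq_left.mpr hx).symm
      _ = ((x ⊔ b) ⊔ b) ⊓ ((y ⊔ a) ⊔ b) := by congr 1; rw [sup_assoc, sup_idem]
      _ = ((x ⊔ b) ⊓ (y ⊔ a)) ⊔ b := (sup_inf_right _ _ _).symm
  · show ((x ⊔ b) ⊓ (y ⊔ a)) ⊔ a = y ⊔ a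
    calc ((x ⊔ b) ⊓ (y ⊔ a)) ⊔ a = ((x ⊔ b) ⊔ a) ⊓ ((y ⊔ a) ⊔ a) := sup_inf_right _ _ _
      _ = ((x ⊔ b) ⊔ a) ⊓ (y ⊔ a) := by congr 1; rw [sup_assoc, sup_idem]
      _ = y ⊔ a := inf_eq_right.mpr hy

theorem stmt19 [DistribWCL L] (F₁ F₂ : Set L) (h₁ : IsSFilter F₁) (h₂ : IsSFilter F₂) :
    Relation.Comp (thetaF F₁) (thetaF F₂) = Relation.Comp (thetaF F₂) (thetaF F₁) := by
  funext x y
  exact propext ⟨thetaF_comp_swap, thetaF_comp_swap⟩
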